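/- Let μ be a partition of n with distinct parts, let t be a μ-tableau, and let π ∈ S_n be an involution (π² = 1, π ≠ 1). If ⟨π·e_t, e_t⟩ is odd, then there exists σ ∈ C_t such that π belongs to the row stabilizer R_{σt}. -/

import Mathlib

noncomputable section
open scoped Classical

/-- The cells of the Young diagram of a partition `μ` (given as a list of parts):
pairs of a row index `r` and a column index `c < μ_r`. -/
abbrev YoungCell (μ : List ℕ) := (r : Fin μ.length) × Fin (μ.get r)

/-- A `μ`-tableau: a bijective filling of the Young diagram of `μ` with the symbols
`1, …, n` (here: the elements of `Fin n`). -/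
abbrev YoungTableau (n : ℕ) (μ : List ℕ) := YoungCell μ ≃ Fin n

/-- A family of rows is a `μ`-tabloid: row `r` has `μ_r` elements, the rows are pairwise
disjoint and cover `{1, …, n}`. -/
def IsTabloid (n : ℕ) (μ : List ℕ) (R : Fin μ.length → Finset (Fin n)) : Prop :=
  (∀ r, (R r).card = μ.get r) ∧
  (∀ r s, r ≠ s → Disjoint (R r) (R s)) ∧
  (∀ i, ∃ r, i ∈ R r)

/-- A `μ`-tabloid: an ordered partition of `{1, …, n}` with block sizes `μ₁, …, μ_ℓ`. -/
def Tabloid (n : ℕ) (μ : List ℕ) := {R : Fin μ.length → Finset (Fin n) // IsTabloid n μ R}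

variable {n : ℕ} {μ : List ℕ}

/-- The action of a permutation on a tabloid, applying it to each row. -/
def permTabloid (π : Equiv.Perm (Fin n)) (R : Tabloid n μ) : Tabloid n μ :=
  ⟨fun r => (R.1 r).image π, by
    obtain ⟨h1, h2, h3⟩ := R.2
    refine ⟨fun r => ?_, fun r s hrs => ?_, fun i => ?_⟩
    · rw [Finset.card_image_of_injective _ π.injective, h1 r]
    · exact (Finset.disjoint_image π.injective).mpr (h2 r s hrs)
    · obtain ⟨r, hr⟩ := h3 (π⁻¹ i)
      exact ⟨r, Finset.mem_image.mpr ⟨π⁻¹ i, hr, by simp⟩⟩⟩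

/-- The action of a permutation on a tableau (postcomposition). -/
def permTableau (π : Equiv.Perm (Fin n)) (t : YoungTableau n μ) : YoungTableau n μ :=
  t.trans π

/-- The tabloid `{t}` determined by a tableau `t`: its `r`-th row is the set of entries
in the `r`-th row of `t`. -/
def tabloidOf (t : YoungTableau n μ) : Tabloid n μ :=
  ⟨fun r => Finset.univ.image fun c : Fin (μ.get r) => t ⟨r, c⟩, by
    refine ⟨fun r => ?_, fun r s hrs => ?_, fun i => ?_⟩
    · rw [Finset.card_image_of_injective, Finset.card_univ, Fintype.card_fin]
      intro c₁ c₂ h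
      have := t.injective h
      exact (Sigma.mk.inj_iff.mp this).2.eq
    · rw [Finset.disjoint_left]
      rintro a ha hb
      obtain ⟨c₁, -, h₁⟩ := Finset.mem_image.mp ha
      obtain ⟨c₂, -, h₂⟩ := Finset.mem_image.mp hb
      have := t.injective (h₁.trans h₂.symm)
      exact hrs (Sigma.mk.inj_iff.mp this).1
    · refine ⟨(t.symm i).1,
        Finset.mem_image.mpr ⟨(t.symm i).2, Finset.mem_univ _, ?_⟩⟩
      exact t.apply_symm_apply i⟩

/-- The (index of the) row of a tableau containing a given symbol. -/
def rowIdx (t : YoungTableau n μ) (i : Fin n) : ℕ :=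
  ((t.symm i).1 : ℕ)

/-- The (index of the) column of a tableau containing a given symbol. -/
def colIdx (t : YoungTableau n μ) (i : Fin n) : ℕ :=
  ((t.symm i).2 : ℕ)

/-- The column stabilizer `C_t` of a tableau: the permutations preserving each column. -/
def colStab (t : YoungTableau n μ) : Finset (Equiv.Perm (Fin n)) :=
  Finset.univ.filter fun σ => ∀ i, colIdx t (σ i) = colIdx t i

/-- Membership in the row stabilizer `R_t` of a tableau. -/
def memRowStab (t : YoungTableau n μ) (π : Equiv.Perm (Fin n)) : Prop :=
  ∀ i, rowIdx t (π i) = rowIdx t i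

/-- The polytabloid `e_t = Σ_{σ ∈ C_t} sgn(σ)·{σt}` of a tableau `t`, an element of the
free `ℤ`-module `M^μ` on the `μ`-tabloids. -/
def polytabloid (t : YoungTableau n μ) : Tabloid n μ →₀ ℤ :=
  ∑ σ ∈ colStab t, ((Equiv.Perm.sign σ : ℤˣ) : ℤ) • Finsupp.single (tabloidOf (permTableau σ t)) 1

/-- The symmetric bilinear form on `M^μ` making the tabloids orthonormal. -/
def tabForm (x y : Tabloid n μ →₀ ℤ) : ℤ :=
  x.sum fun T a => a * y T

/-- The action of a permutation on `M^μ`, permuting the tabloid basis. -/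
def permMap (π : Equiv.Perm (Fin n)) (x : Tabloid n μ →₀ ℤ) : Tabloid n μ →₀ ℤ :=
  Finsupp.mapDomain (permTabloid π) x

/-- `supp(t)`: the set of tabloids `{σt}` for `σ ∈ C_t`. -/
def tabSupp (t : YoungTableau n μ) : Finset (Tabloid n μ) :=
  (colStab t).image fun σ => tabloidOf (permTableau σ t)

/-! Modulo 2 every sign is `1`, so `⟨π·e_t, e_t⟩` has the parity of the number of pairs
`(σ, τ) ∈ C_t × C_t` with `{τt} = π·{σt}`. Since `π` is an involution, swapping `σ` and
`τ` permutes these pairs, so an odd number of them forces a pair with `σ = τ`: then `π`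
fixes the tabloid `{σt}`, which means that `π` preserves every row of `σt`. -/

open scoped Finset

lemma Int.odd_coe_unit (u : ℤˣ) : Odd (u : ℤ) := by
  rcases Int.units_eq_one_or u with rfl | rfl <;> decide

lemma Finset.odd_sum_ite_iff_odd_card_filter {ι : Type*} {s : Finset ι} (p : ι → Prop)
    [DecidablePred p] {u : ι → ℤ} (hu : ∀ i ∈ s, Odd (u i)) :
    Odd (∑ i ∈ s, if p i then u i else 0) ↔ Odd #{i ∈ s | p i} := by
  rw [← ZMod.intCast_eq_one_iff_odd, ← ZMod.natCast_eq_one_iff_odd, Int.cast_sum,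
    Finset.natCast_card_filter]
  refine Eq.congr_left (Finset.sum_congr rfl fun i hi => ?_)
  split_ifs
  · exact ZMod.intCast_eq_one_iff_odd.mpr (hu i hi)
  · exact Int.cast_zero

lemma Finset.exists_apply_eq_of_odd_card_pairs {ι α : Type*} [DecidableEq α] {s : Finset ι}
    {T : ι → α} {f : α → α} (hf : Function.Involutive f)
    (hodd : Odd #{p ∈ s ×ˢ s | T p.2 = f (T p.1)}) : ∃ i ∈ s, f (T i) = T i := by
  by_contra! hne
  rw [← ZMod.natCast_eq_one_iff_odd, Finset.card_eq_sum_ones, Nat.cast_sum, Nat.cast_one] at hodd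
  refine zero_ne_one (hodd ▸ Finset.sum_involution (fun (p : ι × ι) _ => p.swap)
    (fun _ _ => rfl) ?_ ?_ fun p _ => p.swap_swap).symm
  · rintro ⟨i, j⟩ hp - hswap
    simp only [Finset.mem_filter, Finset.mem_product] at hp
    obtain rfl : i = j := (Prod.ext_iff.mp hswap).2
    exact hne i hp.1.1 hp.2.symm
  · rintro ⟨i, j⟩ hp
    simp only [Finset.mem_filter, Finset.mem_product, Prod.swap_prod_mk] at hp ⊢
    exact ⟨hp.1.symm, by rw [hp.2, hf]⟩

@[simp]
lemma mem_tabloidOf_iff (s : YoungTableau n μ) (r : Fin μ.length) (i : Fin n) :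
    i ∈ (tabloidOf s).1 r ↔ (s.symm i).1 = r := by
  simp only [tabloidOf, Finset.mem_image, Finset.mem_univ, true_and]
  constructor
  · rintro ⟨c, rfl⟩
    simp
  · rintro rfl
    exact ⟨(s.symm i).2, s.apply_symm_apply i⟩

lemma permTabloid_one (R : Tabloid n μ) : permTabloid 1 R = R :=
  Subtype.ext <| funext fun _ => Finset.image_id

lemma permTabloid_mul (π ρ : Equiv.Perm (Fin n)) (R : Tabloid n μ) :
    permTabloid (π * ρ) R = permTabloid π (permTabloid ρ R) :=
  Subtype.ext <| funext fun _ => by simp only [permTabloid, Equiv.Perm.coe_mul, Finset.image_image]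

lemma permTabloid_involutive {π : Equiv.Perm (Fin n)} (hπ : π ^ 2 = 1) :
    Function.Involutive (permTabloid (μ := μ) π) := fun R => by
  rw [← permTabloid_mul, ← sq, hπ, permTabloid_one]

lemma memRowStab_of_permTabloid_eq {s : YoungTableau n μ} {π : Equiv.Perm (Fin n)}
    (h : permTabloid π (tabloidOf s) = tabloidOf s) : memRowStab s π := fun i => by
  have hrow : π i ∈ (permTabloid π (tabloidOf s)).1 (s.symm i).1 :=
    Finset.mem_image_of_mem π ((mem_tabloidOf_iff s _ i).mpr rfl)
  rw [h, mem_tabloidOf_iff] at hrow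
  exact congrArg Fin.val hrow

lemma tabForm_sum_single_sum_single {ι κ : Type*} (s : Finset ι) (s' : Finset κ)
    (A : ι → Tabloid n μ) (B : κ → Tabloid n μ) (a : ι → ℤ) (b : κ → ℤ) :
    tabForm (∑ i ∈ s, Finsupp.single (A i) (a i)) (∑ j ∈ s', Finsupp.single (B j) (b j)) =
      ∑ p ∈ s ×ˢ s', if B p.2 = A p.1 then a p.1 * b p.2 else 0 := by
  rw [tabForm, ← Finsupp.sum_finsetSum_index (fun _ => by simp) (fun _ _ _ => add_mul _ _ _),
    Finset.sum_product]
  refine Finset.sum_congr rfl fun i _ => ?_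
  rw [Finsupp.sum_single_index (zero_mul _), Finsupp.finsetSum_apply, Finset.mul_sum]
  simp only [Finsupp.single_apply, mul_ite, mul_zero]

lemma polytabloid_eq_sum_single (t : YoungTableau n μ) :
    polytabloid t = ∑ σ ∈ colStab t,
      Finsupp.single (tabloidOf (permTableau σ t)) ((Equiv.Perm.sign σ : ℤˣ) : ℤ) := by
  simp only [polytabloid, Finsupp.smul_single, smul_eq_mul, mul_one]

lemma permMap_polytabloid (π : Equiv.Perm (Fin n)) (t : YoungTableau n μ) :
    permMap π (polytabloid t) = ∑ σ ∈ colStab t,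
      Finsupp.single (permTabloid π (tabloidOf (permTableau σ t)))
        ((Equiv.Perm.sign σ : ℤˣ) : ℤ) := by
  rw [polytabloid_eq_sum_single, permMap, Finsupp.mapDomain_finsetSum]
  exact Finset.sum_congr rfl fun _ _ => Finsupp.mapDomain_single

lemma odd_tabForm_permMap_polytabloid_iff (π : Equiv.Perm (Fin n)) (t : YoungTableau n μ) :
    Odd (tabForm (permMap π (polytabloid t)) (polytabloid t)) ↔
      Odd #{p ∈ colStab t ×ˢ colStab t |
        tabloidOf (permTableau p.2 t) = permTabloid π (tabloidOf (permTableau p.1 t))} := by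
  rw [permMap_polytabloid, polytabloid_eq_sum_single, tabForm_sum_single_sum_single]
  exact Finset.odd_sum_ite_iff_odd_card_filter _ fun p _ =>
    (Int.odd_coe_unit _).mul (Int.odd_coe_unit _)

theorem mem_rowStab_of_odd_tabForm_general
    (t : YoungTableau n μ) (π : Equiv.Perm (Fin n)) (hπ : π ^ 2 = 1)
    (hodd : Odd (tabForm (permMap π (polytabloid t)) (polytabloid t))) :
    ∃ σ ∈ colStab t, memRowStab (permTableau σ t) π := by
  rw [odd_tabForm_permMap_polytabloid_iff] at hodd
  obtain ⟨σ, hσ, hfix⟩ := Finset.exists_apply_eq_of_odd_card_pairs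
    (T := fun σ => tabloidOf (permTableau σ t)) (permTabloid_involutive hπ) hodd
  exact ⟨σ, hσ, memRowStab_of_permTabloid_eq hfix⟩

/-- Let `μ` be a partition of `n` with distinct parts, `t` a `μ`-tableau and `π ∈ S_n` an
involution.  If `⟨π·e_t, e_t⟩` is odd then `π` belongs to the row stabilizer `R_{σt}` for
some `σ ∈ C_t`. -/
theorem mem_rowStab_of_odd_tabForm
    (hpos : ∀ i ∈ μ, 0 < i) (hdist : μ.Chain' (· > ·)) (hsum : μ.sum = n)
    (t : YoungTableau n μ) (π : Equiv.Perm (Fin n)) (hπ : π ^ 2 = 1) (hπ1 : π ≠ 1)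
    (hodd : Odd (tabForm (permMap π (polytabloid t)) (polytabloid t))) :
    ∃ σ ∈ colStab t, memRowStab (permTableau σ t) π :=
  mem_rowStab_of_odd_tabForm_general t π hπ hodd

end
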